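/- arXiv:1307.5690 — 3 statements merged into one kernel-verified Lean document; each statement's English description precedes it below -/
import Mathlib

section
/- The number of closed walks of length $d(m-1)$ on vertex set $[n]$ whose arc multiset $E$ satisfies: $|E| = d(m-1)$, $E$ is balanced, and every outdegree is a multiple of $m-1$, equals $\sum_{d_1+\cdots+d_n = d} \frac{(d(m-1))!}{\prod_{i=1}^n (d_i(m-1))!}$, where the sum is over all tuples of nonnegative integers summing to $d$, counting each closed walk as a cyclic sequence with a marked starting vertex (i.e., as a vertex sequence $v_0, v_1, \dots, v_{d(m-1)}$ with $v_{d(m-1)} = v_0$). -/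
/-- Outdegree of vertex `i` in a multiset of arcs. -/
def outdeg {n : ℕ} (E : Multiset (Fin n × Fin n)) (i : Fin n) : ℕ :=
  (E.filter (fun e => e.1 = i)).card

/-- Indegree of vertex `i` in a multiset of arcs. -/
def indeg {n : ℕ} (E : Multiset (Fin n × Fin n)) (i : Fin n) : ℕ :=
  (E.filter (fun e => e.2 = i)).card

/-- The arc multiset of a closed walk `v 0, v 1, …, v (L-1), v 0`. -/
def cyclicArcs {n L : ℕ} (v : Fin L → Fin n) : Multiset (Fin n × Fin n) :=
  (Finset.univ : Finset (Fin L)).val.map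
    (fun t => (v t, v ⟨((t : ℕ) + 1) % L, Nat.mod_lt _ t.pos⟩))

/-!
In the arc multiset of a closed walk, both the outdegree and the indegree of a vertex equal the
number of visits to it, so balance is automatic and the walks to count are the vertex sequences of
length `d(m-1)` in which every vertex is visited a multiple of `m-1` times. Grouping them by
`dᵢ = (visits to i)/(m-1)`, the sequences with prescribed visit counts are counted by a multinomial
coefficient, which is the coefficient of `∏ Xᵢ^(dᵢ(m-1))` in `(X₁ + ⋯ + Xₙ)^(d(m-1))`.
-/

open Finset Nat MvPolynomial

theorem outdeg_cyclicArcs {n L : ℕ} (v : Fin L → Fin n) (i : Fin n) :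
    outdeg (cyclicArcs v) i = #{t | v t = i} := by
  simp only [outdeg, cyclicArcs, Multiset.filter_map, Multiset.card_map]
  rfl

theorem indeg_cyclicArcs {n L : ℕ} (v : Fin L → Fin n) (i : Fin n) :
    indeg (cyclicArcs v) i = #{t | v t = i} := by
  simp only [indeg, cyclicArcs, Multiset.filter_map, Multiset.card_map]
  obtain _ | L := L
  · rfl
  have hsucc (t : Fin (L + 1)) :
      (⟨(t + 1) % (L + 1), Nat.mod_lt _ t.pos⟩ : Fin (L + 1)) = t + 1 := by
    ext; simp [Fin.val_add]
  simp only [hsucc]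
  change #{t | v (t + 1) = i} = _
  rw [card_filter, card_filter]
  exact Equiv.sum_comp (Equiv.addRight (1 : Fin (L + 1))) (fun t => if v t = i then 1 else 0)

theorem sum_card_fiber_eq_card {ι σ : Type*} [Fintype ι] [Fintype σ] [DecidableEq σ]
    (v : ι → σ) : ∑ i, #{t | v t = i} = Fintype.card ι := by
  simpa using sum_card_fiberwise_eq_card_filter univ univ v

theorem Nat.cast_multinomial {ι K : Type*} [Field K] [CharZero K] (s : Finset ι) (f : ι → ℕ) :
    (Nat.multinomial s f : K) = (∑ i ∈ s, f i)! / ∏ i ∈ s, ((f i)! : K) := by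
  rw [eq_div_iff (by simp [prod_ne_zero_iff, Nat.factorial_ne_zero]), mul_comm,
    ← Nat.multinomial_spec]
  push_cast
  rfl

theorem card_filter_card_fiber_eq_multinomial {ι σ : Type*} [Fintype ι] [DecidableEq ι]
    [Fintype σ] [DecidableEq σ] (k : σ → ℕ) (hk : ∑ i, k i = Fintype.card ι) :
    #{v : ι → σ | ∀ i, #{t | v t = i} = k i} = Nat.multinomial univ k := by
  set K := Finsupp.equivFunOnFinite.symm k
  have hfiber (v : ι → σ) : ∑ t, Finsupp.single (v t) 1 = K ↔ ∀ i, #{t | v t = i} = k i := by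
    simp [Finsupp.ext_iff, K, Finsupp.finsetSum_apply, Finsupp.single_apply, eq_comm]
  have hprod (v : ι → σ) : ∏ t, (X (v t) : MvPolynomial σ ℕ) =
      monomial (∑ t, Finsupp.single (v t) 1) 1 := by
    rw [monomial_sum_one]; rfl
  -- expand `(∑ i, X i) ^ card ι = ∏ t : ι, ∑ i, X i` into one monomial per sequence `v`
  have hcoeff := coeff_sum_X_pow_of_fintype (R := ℕ) K (Fintype.card ι)
  rw [if_pos (by simp [K, Finsupp.sum_fintype, hk]), Nat.cast_id,
    Finsupp.multinomial_eq_of_support_subset (subset_univ _), ← Finset.card_univ, ← prod_const,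
    Fintype.prod_sum, coeff_sum] at hcoeff
  simp only [hprod, coeff_monomial, hfiber] at hcoeff
  rw [card_filter, hcoeff]
  rfl

theorem card_filter_dvd_card_fiber {ι : Type*} [Fintype ι] [DecidableEq ι] {n d q : ℕ}
    (hq : 0 < q) (hι : Fintype.card ι = d * q) :
    #{v : ι → Fin n | ∀ i, q ∣ #{t | v t = i}} =
      ∑ c ∈ Nat.antidiagonalTuple n d, #{v : ι → Fin n | ∀ i, #{t | v t = i} = c i * q} := by
  rw [card_eq_sum_card_fiberwise (f := fun v i => #{t | v t = i} / q)
    (t := Nat.antidiagonalTuple n d) fun v hv => ?_]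
  · refine sum_congr rfl fun c _ => ?_
    rw [filter_filter]
    refine congrArg card (filter_congr fun v _ => ⟨?_, fun h => ?_⟩)
    · rintro ⟨hdvd, rfl⟩ i
      exact (Nat.div_mul_cancel (hdvd i)).symm
    · refine ⟨fun i => h i ▸ dvd_mul_left _ _, funext fun i => ?_⟩
      simp only [h i, Nat.mul_div_cancel _ hq]
  · simp only [coe_filter, mem_univ, true_and, Set.mem_ofPred_eq] at hv
    rw [mem_coe, Nat.mem_antidiagonalTuple, ← Nat.mul_left_cancel_iff hq, mul_sum]
    simp only [Nat.mul_div_cancel' (hv _), sum_card_fiber_eq_card, hι, mul_comm]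

theorem card_filter_dvd_card_fiber_eq_sum_multinomial {ι : Type*} [Fintype ι] [DecidableEq ι]
    {n d q : ℕ} (hq : 0 < q) (hι : Fintype.card ι = d * q) :
    #{v : ι → Fin n | ∀ i, q ∣ #{t | v t = i}} =
      ∑ c ∈ Nat.antidiagonalTuple n d, Nat.multinomial univ (fun i => c i * q) := by
  rw [card_filter_dvd_card_fiber hq hι]
  refine sum_congr rfl fun c hc => ?_
  -- `convert` reconciles the instances `decidableForallFin` and `Fintype.decidableForallFintype`
  convert card_filter_card_fiber_eq_multinomial (fun i => c i * q) ?_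
  rw [← sum_mul, Nat.mem_antidiagonalTuple.mp hc, hι]

open Classical in
theorem stmt9_general (n m d : ℕ) (hm : 2 ≤ m) :
    ((Finset.univ.filter (fun v : Fin (d * (m - 1)) → Fin n =>
        (∀ i, outdeg (cyclicArcs v) i = indeg (cyclicArcs v) i) ∧
        (∀ i, (m - 1) ∣ outdeg (cyclicArcs v) i))).card : ℚ) =
      ∑ c ∈ Finset.Nat.antidiagonalTuple n d,
        (Nat.factorial (d * (m - 1)) : ℚ) /
          ∏ i : Fin n, (Nat.factorial (c i * (m - 1)) : ℚ) := by
  simp only [outdeg_cyclicArcs, indeg_cyclicArcs, true_and, implies_true]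
  rw [card_filter_dvd_card_fiber_eq_sum_multinomial (by omega) (Fintype.card_fin _)]
  push_cast
  refine sum_congr rfl fun c hc => ?_
  rw [Nat.cast_multinomial, ← sum_mul, Nat.mem_antidiagonalTuple.mp hc]

open Classical in
theorem stmt9 (n m d : ℕ) (hm : 2 ≤ m) (hd : 1 ≤ d) (hn : 1 ≤ n) :
    ((Finset.univ.filter (fun v : Fin (d * (m - 1)) → Fin n =>
        (∀ i, outdeg (cyclicArcs v) i = indeg (cyclicArcs v) i) ∧
        (∀ i, (m - 1) ∣ outdeg (cyclicArcs v) i))).card : ℚ) =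
      ∑ c ∈ Finset.Nat.antidiagonalTuple n d,
        (Nat.factorial (d * (m - 1)) : ℚ) /
          ∏ i : Fin n, (Nat.factorial (c i * (m - 1)) : ℚ) :=
  stmt9_general n m d hm
end

section
/- Let $\lambda_1,\dots,\lambda_r \in \mathbb{C}$ and $k \ge 2$. Suppose the power sums $s_d = \sum_{j=1}^r \lambda_j^d$ satisfy $s_d = 0$ for every $d \ge 1$ not divisible by $k$. Then the multiset $\{\lambda_1,\dots,\lambda_r\}$ is invariant under multiplication by $e^{2\pi i/k}$. -/
/-!
By Newton's identities `d e_d = ± ∑_{a + b = d, a < d} ± e_a p_b`, and if `k ∤ d` then every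
term has `k ∤ a` or `k ∤ b`; so by strong induction the elementary symmetric functions `e_d` of
the `λ_j` vanish for `k ∤ d`. Multiplying all `λ_j` by a `k`-th root of unity `ζ` multiplies `e_d`
by `ζ ^ d`, which is `1` whenever `e_d ≠ 0`, and a multiset is determined by its cardinality and
its elementary symmetric functions (they are the coefficients of `∏ (X - λ_j)`).
-/

open Finset Polynomial

namespace Multiset

variable {R : Type*} [CommRing R]

theorem esymm_map_mul_left (c : R) (s : Multiset R) (n : ℕ) :
    (s.map (c * ·)).esymm n = c ^ n * s.esymm n := by
  simpa only [smul_eq_mul] using (pow_smul_esymm c n s).symm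

theorem eq_of_card_eq_of_esymm_eq [IsDomain R] {s t : Multiset R} (hcard : card s = card t)
    (h : ∀ n, s.esymm n = t.esymm n) : s = t := by
  have hprod : (s.map fun a => X - C a).prod = (t.map fun a => X - C a).prod := by
    simp only [prod_X_sub_X_eq_sum_esymm, hcard, h]
  simpa only [roots_multiset_prod_X_sub_C] using congrArg roots hprod

theorem map_mul_left_eq_self_of_esymm_eq_zero [IsDomain R] {k : ℕ} {ζ : R} (hζ : ζ ^ k = 1)
    {s : Multiset R} (h : ∀ n, ¬ k ∣ n → s.esymm n = 0) : s.map (ζ * ·) = s := by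
  refine eq_of_card_eq_of_esymm_eq (card_map _ _) fun n => ?_
  rw [esymm_map_mul_left]
  by_cases hkn : k ∣ n
  · obtain ⟨m, rfl⟩ := hkn
    rw [pow_mul, hζ, one_pow, one_mul]
  · rw [h n hkn, mul_zero]

end Multiset

section Newton

variable {σ R : Type*} [Fintype σ] [CommRing R]

theorem mul_esymm_map_univ_eq_sum (x : σ → R) (n : ℕ) :
    n * (univ.val.map x).esymm n = (-1) ^ (n + 1) *
      ∑ a ∈ antidiagonal n with a.1 < n,
        (-1) ^ a.1 * (univ.val.map x).esymm a.1 * ∑ i, x i ^ a.2 := by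
  simpa only [map_mul, map_pow, map_neg, map_one, map_natCast, map_sum, MvPolynomial.aeval_X,
    MvPolynomial.aeval_esymm_eq_multiset_esymm, MvPolynomial.psum] using
    congrArg (MvPolynomial.aeval x) (MvPolynomial.mul_esymm_eq_sum σ R n)

theorem esymm_map_univ_eq_zero_of_psum_eq_zero [IsDomain R] [CharZero R] {k : ℕ} (x : σ → R)
    (h : ∀ d, ¬ k ∣ d → ∑ i, x i ^ d = 0) (n : ℕ) (hn : ¬ k ∣ n) :
    (univ.val.map x).esymm n = 0 := by
  induction n using Nat.strong_induction_on with
  | _ n ih =>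
    have hsum : ∑ a ∈ antidiagonal n with a.1 < n,
        (-1) ^ a.1 * (univ.val.map x).esymm a.1 * ∑ i, x i ^ a.2 = 0 := by
      refine sum_eq_zero fun ⟨a, b⟩ hab => ?_
      obtain ⟨rfl, ha⟩ : a + b = n ∧ a < n := by
        simpa only [mem_filter, HasAntidiagonal.mem_antidiagonal] using hab
      by_cases hkb : k ∣ b
      · rw [ih a ha fun hka => hn (dvd_add hka hkb), mul_zero, zero_mul]
      · rw [h b hkb, mul_zero]
    have hn0 : (n : R) ≠ 0 := Nat.cast_ne_zero.mpr (by rintro rfl; exact hn (dvd_zero k))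
    simpa [hsum, hn0] using mul_esymm_map_univ_eq_sum x n

end Newton

theorem stmt13_general (r k : ℕ) (lam : Fin r → ℂ)
    (h : ∀ d, 1 ≤ d → ¬ k ∣ d → ∑ j, lam j ^ d = 0) :
    ((Finset.univ : Finset (Fin r)).val.map lam).map
        (fun z => Complex.exp (2 * Real.pi * Complex.I / k) * z) =
      (Finset.univ : Finset (Fin r)).val.map lam := by
  have hζ : Complex.exp (2 * Real.pi * Complex.I / k) ^ k = 1 := by
    rcases eq_or_ne k 0 with rfl | hk
    · exact pow_zero _
    · exact (Complex.isPrimitiveRoot_exp k hk).pow_eq_one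
  have hpsum : ∀ d, ¬ k ∣ d → ∑ j, lam j ^ d = 0 := fun d hd =>
    h d (Nat.one_le_iff_ne_zero.mpr (by rintro rfl; exact hd (dvd_zero k))) hd
  exact Multiset.map_mul_left_eq_self_of_esymm_eq_zero hζ
    (esymm_map_univ_eq_zero_of_psum_eq_zero lam hpsum)

theorem stmt13 (r k : ℕ) (hk : 2 ≤ k) (lam : Fin r → ℂ)
    (h : ∀ d, 1 ≤ d → ¬ k ∣ d → ∑ j, lam j ^ d = 0) :
    ((Finset.univ : Finset (Fin r)).val.map lam).map
        (fun z => Complex.exp (2 * Real.pi * Complex.I / k) * z) =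
      (Finset.univ : Finset (Fin r)).val.map lam :=
  stmt13_general r k lam h
end

section
/- Let $m \ge 2$ and $i \ne j$ be two vertices. For $0 \le s \le m-1$, let $E_s$ be the arc multiset $(i,j)^s (j,i)^s (i,i)^{m-1-s} (j,j)^{m-1-s}$ on vertex set $\{i,j\}$. Then the number of closed directed walks (vertex sequences $v_0,\dots,v_\ell$ with $v_\ell = v_0$, $\ell = 2(m-1)$) whose arc multiset equals $E_s$ is $2\binom{m-1}{s}\binom{m-2}{s-1}$ for $1 \le s \le m-1$, and is $0$ for $s = 0$. -/
open Finset

/-- Number of compositions of `a` into `b` positive parts. -/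
def myc : ℕ → ℕ → ℕ
  | 0, 0 => 1
  | 0, _+1 => 0
  | _+1, 0 => 0
  | a+1, b+1 => Nat.choose a b

@[simp] lemma myc_zero_zero : myc 0 0 = 1 := rfl
@[simp] lemma myc_zero_succ (b : ℕ) : myc 0 (b+1) = 0 := rfl
@[simp] lemma myc_succ_zero (a : ℕ) : myc (a+1) 0 = 0 := rfl
@[simp] lemma myc_succ_succ (a b : ℕ) : myc (a+1) (b+1) = Nat.choose a b := rfl

lemma myc_rec (a b : ℕ) : myc (a+1) (b+1) = myc a b + myc a (b+1) := by
  cases a with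
  | zero => cases b <;> simp
  | succ a =>
    cases b with
    | zero => simp [Nat.choose]
    | succ b => simp [Nat.choose_succ_succ]

/-- number of `true`s in a word. -/
def wones {n : ℕ} (b : Fin n → Bool) : ℕ := ∑ t : Fin n, (if b t = true then 1 else 0)

/-- number of (linear) descents `true,false` in a word. -/
def wdesc {n : ℕ} (b : Fin (n+1) → Bool) : ℕ :=
  ∑ t : Fin n, (if b t.castSucc = true ∧ b t.succ = false then 1 else 0)

lemma wones_cons {n : ℕ} (x : Bool) (w : Fin n → Bool) :
    wones (Fin.cons x w) = (if x = true then 1 else 0) + wones w := by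
  unfold wones
  rw [Fin.sum_univ_succ]
  simp

lemma wdesc_cons {n : ℕ} (x : Bool) (w : Fin (n+1) → Bool) :
    wdesc (Fin.cons x w) = (if x = true ∧ w 0 = false then 1 else 0) + wdesc w := by
  unfold wdesc
  rw [Fin.sum_univ_succ]
  congr 1

@[simp] lemma cons_last {n : ℕ} (x : Bool) (w : Fin (n+1) → Bool) :
    (Fin.cons x w : Fin (n+2) → Bool) (Fin.last (n+1)) = w (Fin.last n) := by
  rw [← Fin.succ_last, Fin.cons_succ]

/-- Closed form. -/
def cf (p z r : ℕ) (a c : Bool) : ℕ :=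
  myc p (if c then r+1 else r) * myc z (if a then r else r+1)

lemma card_filter_piFinSucc {n : ℕ} (P : (Fin (n+1) → Bool) → Prop) [DecidablePred P] :
    (univ.filter P).card =
      (univ.filter (fun w : Fin n → Bool => P (Fin.cons true w))).card
      + (univ.filter (fun w : Fin n → Bool => P (Fin.cons false w))).card := by
  rw [Finset.card_filter, Finset.card_filter, Finset.card_filter]
  rw [← Equiv.sum_comp (Fin.consEquiv (fun _ : Fin (n+1) => Bool)).symm.symm
      (fun b => if P b then 1 else 0)]
  rw [Fintype.sum_prod_type]
  rw [Fintype.sum_bool]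
  rfl

def WS (n p r : ℕ) (a c : Bool) : Finset (Fin (n+1) → Bool) :=
  univ.filter (fun b => wones b = p ∧ wdesc b = r ∧ b 0 = a ∧ b (Fin.last n) = c)

lemma card_filter_split0 {n : ℕ} (Q : (Fin (n+1) → Bool) → Prop) [DecidablePred Q] :
    (univ.filter Q).card = (univ.filter (fun w => Q w ∧ w 0 = true)).card
      + (univ.filter (fun w => Q w ∧ w 0 = false)).card := by
  have := Finset.card_filter_add_card_filter_not (s := univ.filter Q)
    (p := fun w : Fin (n+1) → Bool => w 0 = true)
  rw [Finset.filter_filter, Finset.filter_filter] at this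
  rw [← this]
  congr 2
  ext w
  simp

lemma WS_rec_true (n p r : ℕ) (c : Bool) :
    (WS (n+1) (p+1) r true c).card =
      (WS n p r true c).card + (if r = 0 then 0 else (WS n p (r-1) false c).card) := by
  unfold WS
  rw [card_filter_piFinSucc]
  have h2 : (univ.filter (fun w : Fin (n+1) → Bool =>
      wones (Fin.cons false w) = p+1 ∧ wdesc (Fin.cons false w) = r ∧
      (Fin.cons false w : Fin (n+2) → Bool) 0 = true ∧
      (Fin.cons false w : Fin (n+2) → Bool) (Fin.last (n+1)) = c)).card = 0 := by
    rw [Finset.card_eq_zero]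
    apply Finset.filter_false_of_mem
    intro w _
    simp
  rw [h2, add_zero, card_filter_split0]
  congr 1
  · apply congrArg
    apply Finset.filter_congr
    intro w _
    cases hw : w 0 <;> cases hc : w (Fin.last n) <;> cases c <;> simp [wones_cons, wdesc_cons, hw, hc] <;> intros <;> omega
  · rcases Nat.eq_zero_or_pos r with hr | hr
    · subst hr
      rw [if_pos rfl, Finset.card_eq_zero]
      apply Finset.filter_false_of_mem
      intro w _
      cases hw : w 0 <;> simp [wones_cons, wdesc_cons, hw]
    · rw [if_neg (by omega)]
      apply congrArg
      apply Finset.filter_congr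
      intro w _
      cases hw : w 0 <;> cases hc : w (Fin.last n) <;> cases c <;> simp [wones_cons, wdesc_cons, hw, hc] <;> intros <;> omega

lemma WS_rec_false (n p r : ℕ) (c : Bool) :
    (WS (n+1) p r false c).card =
      (WS n p r true c).card + (WS n p r false c).card := by
  unfold WS
  rw [card_filter_piFinSucc]
  have h2 : (univ.filter (fun w : Fin (n+1) → Bool =>
      wones (Fin.cons true w) = p ∧ wdesc (Fin.cons true w) = r ∧
      (Fin.cons true w : Fin (n+2) → Bool) 0 = false ∧
      (Fin.cons true w : Fin (n+2) → Bool) (Fin.last (n+1)) = c)).card = 0 := by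
    rw [Finset.card_eq_zero]
    apply Finset.filter_false_of_mem
    intro w _
    simp
  rw [h2, zero_add, card_filter_split0]
  congr 1 <;>
  · apply congrArg
    apply Finset.filter_congr
    intro w _
    cases hw : w 0 <;> cases hc : w (Fin.last n) <;> cases c <;> simp [wones_cons, wdesc_cons, hw, hc] <;> intros <;> omega

lemma WS_zero_ones (n r : ℕ) (c : Bool) :
    (WS (n+1) 0 r true c).card = 0 := by
  rw [Finset.card_eq_zero]
  apply Finset.filter_false_of_mem
  intro b _
  rintro ⟨h1, -, h3, -⟩
  unfold wones at h1
  have := Finset.sum_eq_zero_iff.mp h1 0 (Finset.mem_univ 0)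
  simp [h3] at this

lemma wdesc_len0 (b : Fin 1 → Bool) : wdesc b = 0 := by simp [wdesc]

lemma wones_le {n : ℕ} (b : Fin n → Bool) : wones b ≤ n := by
  unfold wones
  calc ∑ t : Fin n, (if b t = true then 1 else 0) ≤ ∑ _t : Fin n, 1 := by
        apply Finset.sum_le_sum; intro t _; split <;> omega
    _ = n := by simp

lemma mycs (a b : ℕ) : myc a b + myc a (1 + b) = Nat.choose a b := by
  rw [Nat.add_comm 1 b, ← myc_rec, myc_succ_succ]

lemma L1 : ∀ (n p z r : ℕ) (a c : Bool), p + z = n + 1 →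
    (WS n p r a c).card = cf p z r a c := by
  intro n
  induction n with
  | zero =>
    intro p z r a c hpz
    rcases r with _ | r'
    · rcases (show p = 0 ∧ z = 1 ∨ p = 1 ∧ z = 0 by omega) with ⟨hp, hz⟩ | ⟨hp, hz⟩ <;>
        subst hp <;> subst hz <;> cases a <;> cases c <;> decide
    · have hcard : (WS 0 p (r'+1) a c).card = 0 := by
        rw [Finset.card_eq_zero]
        apply Finset.filter_false_of_mem
        intro b _
        rintro ⟨-, h2, -, -⟩
        rw [wdesc_len0 b] at h2
        omega
      rw [hcard]
      rcases (show p = 0 ∧ z = 1 ∨ p = 1 ∧ z = 0 by omega) with ⟨hp, hz⟩ | ⟨hp, hz⟩ <;>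
        subst hp <;> subst hz <;> cases a <;> cases c <;> simp [cf]
  | succ n ih =>
    intro p z r a c hpz
    cases a with
    | false =>
      rcases z with _ | z'
      · have hcard : (WS (n+1) p r false c).card = 0 := by
          rw [Finset.card_eq_zero]
          apply Finset.filter_false_of_mem
          intro b _
          rintro ⟨h1, -, h3, -⟩
          unfold wones at h1
          rw [Fin.sum_univ_succ, h3] at h1
          have hb : ∑ t : Fin (n+1), (if b t.succ = true then 1 else 0) ≤ n + 1 := by
            calc ∑ t : Fin (n+1), (if b t.succ = true then 1 else 0)
                ≤ ∑ _t : Fin (n+1), 1 := by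
                  apply Finset.sum_le_sum; intro t _; split <;> omega
              _ = n + 1 := by simp
          simp only [if_neg (by simp : ¬ (false = true))] at h1
          omega
        rw [hcard]
        cases c <;> simp [cf]
      · rw [WS_rec_false, ih p z' r true c (by omega), ih p z' r false c (by omega)]
        cases c <;> simp [cf] <;> rw [← mycs] <;> ring
    | true =>
      rcases p with _ | p'
      · rw [WS_zero_ones]
        have hz : z = n + 2 := by omega
        subst hz
        cases r <;> cases c <;> simp [cf]
      · rw [WS_rec_true]
        rcases r with _ | r'
        · rw [if_pos rfl, add_zero, ih p' z 0 true c (by omega)]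
          rcases z with _ | z''
          · have hp' : p' = n + 1 := by omega
            subst hp'
            cases c <;> simp [cf]
          · cases c <;> simp [cf]
        · rw [if_neg (by omega)]
          simp only [Nat.add_sub_cancel]
          rw [ih p' z (r'+1) true c (by omega), ih p' z r' false c (by omega)]
          cases c <;> simp [cf] <;> rw [← mycs] <;> ring

section Cyclic

variable {n : ℕ}

def cntOnes (b : Fin (n+1) → Bool) : ℕ := (univ.filter (fun t => b t = true)).card

def cntDesc (b : Fin (n+1) → Bool) : ℕ :=
  (univ.filter (fun t => b t = true ∧ b (t+1) = false)).card

lemma cntOnes_eq_wones (b : Fin (n+1) → Bool) : cntOnes b = wones b := by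
  rw [cntOnes, Finset.card_filter]; rfl

lemma cntDesc_eq (b : Fin (n+1) → Bool) :
    cntDesc b = wdesc b + (if b (Fin.last n) = true ∧ b 0 = false then 1 else 0) := by
  rw [cntDesc, Finset.card_filter, Fin.sum_univ_castSucc]
  congr 1
  · rw [wdesc]
    apply Finset.sum_congr rfl
    intro t _
    rw [Fin.coeSucc_eq_succ]
  · rw [Fin.last_add_one]

lemma card_split {α : Type*} [Fintype α] (P Q : α → Prop) [DecidablePred P] [DecidablePred Q] :
    (univ.filter P).card =
      (univ.filter (fun x => P x ∧ Q x)).card + (univ.filter (fun x => P x ∧ ¬ Q x)).card := by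
  have := Finset.card_filter_add_card_filter_not (s := (univ : Finset α).filter P) (p := Q)
  rw [Finset.filter_filter, Finset.filter_filter] at this
  omega

lemma card_shift (b : Fin (n+1) → Bool) :
    (univ.filter (fun t => b (t+1) = true)).card = cntOnes b := by
  rw [cntOnes]
  apply Finset.card_bij (fun t _ => t + 1)
  · intro t ht
    simp only [Finset.mem_filter, Finset.mem_univ, true_and] at *
    exact ht
  · intro t _ t' _ h
    exact add_right_cancel h
  · intro u hu
    have h : u - 1 + 1 = u := by
      rw [sub_add_cancel]
    refine ⟨u - 1, ?_, h⟩
    simp only [Finset.mem_filter, Finset.mem_univ, true_and, h] at *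
    exact hu

lemma asc_eq_desc (b : Fin (n+1) → Bool) :
    (univ.filter (fun t => b t = false ∧ b (t+1) = true)).card = cntDesc b := by
  have h1 := card_shift b
  have h2 := card_split (fun t : Fin (n+1) => b (t+1) = true) (fun t => b t = true)
  have h3 := card_split (fun t : Fin (n+1) => b t = true) (fun t => b (t+1) = true)
  rw [h1] at h2
  rw [show (univ.filter (fun t => b t = true)).card = cntOnes b from rfl] at h3
  have e1 : (univ.filter (fun t : Fin (n+1) => b (t+1) = true ∧ ¬ b t = true)).card
      = (univ.filter (fun t => b t = false ∧ b (t+1) = true)).card := by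
    apply congrArg
    apply Finset.filter_congr
    intro t _
    simp [and_comm]
  have e2 : (univ.filter (fun t : Fin (n+1) => b t = true ∧ ¬ b (t+1) = true)).card
      = cntDesc b := by
    rw [cntDesc]
    apply congrArg
    apply Finset.filter_congr
    intro t _
    simp
  have e3 : (univ.filter (fun t : Fin (n+1) => b (t+1) = true ∧ b t = true)).card
      = (univ.filter (fun t : Fin (n+1) => b t = true ∧ b (t+1) = true)).card := by
    apply congrArg
    apply Finset.filter_congr
    intro t _
    simp [and_comm]
  omega

end Cyclic

section Cyclic2

variable {n : ℕ}

open Fin.NatCast in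
lemma all_true_of_no_desc (b : Fin (n+1) → Bool) (hd : cntDesc b = 0)
    (t0 : Fin (n+1)) (ht0 : b t0 = true) : ∀ u, b u = true := by
  have step : ∀ t : Fin (n+1), b t = true → b (t+1) = true := by
    intro t ht
    by_contra hcon
    have hmem : t ∈ univ.filter (fun t => b t = true ∧ b (t+1) = false) := by
      simp only [Finset.mem_filter, Finset.mem_univ, true_and]
      exact ⟨ht, by simpa using hcon⟩
    have : (univ.filter (fun t => b t = true ∧ b (t+1) = false)).card ≠ 0 := by
      apply Finset.card_ne_zero_of_mem hmem
    exact this hd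
  have hiter : ∀ d : ℕ, b (t0 + (d : Fin (n+1))) = true := by
    intro d
    induction d with
    | zero => simpa using ht0
    | succ d ihd =>
      have : ((d+1 : ℕ) : Fin (n+1)) = (d : Fin (n+1)) + 1 := by
        push_cast
        ring
      rw [this, ← add_assoc]
      exact step _ ihd
  intro u
  have := hiter ((u - t0).val)
  rwa [Fin.cast_val_eq_self, add_sub_cancel] at this

lemma count_bool (k s : ℕ) (hk : 1 ≤ k) (h2 : n + 1 = 2 * k) (hs : s ≤ k) :
    ((univ : Finset (Fin (n+1) → Bool)).filter
        (fun b => cntOnes b = k ∧ cntDesc b = s)).card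
      = if s = 0 then 0 else 2 * Nat.choose k s * Nat.choose (k-1) (s-1) := by
  rcases s with _ | s'
  · rw [if_pos rfl, Finset.card_eq_zero]
    apply Finset.filter_false_of_mem
    intro b _
    rintro ⟨h1, hd⟩
    -- some t with b t = true since k ≥ 1
    have hne : ∃ t, b t = true := by
      by_contra hcon
      push_neg at hcon
      have : cntOnes b = 0 := by
        rw [cntOnes, Finset.card_eq_zero]
        apply Finset.filter_false_of_mem
        intro t _
        simp [hcon t]
      omega
    obtain ⟨t0, ht0⟩ := hne
    have hall := all_true_of_no_desc b hd t0 ht0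
    have : cntOnes b = n + 1 := by
      rw [cntOnes]
      rw [Finset.filter_true_of_mem (fun t _ => hall t)]
      simp
    omega
  · rw [if_neg (by omega)]
    rw [card_split _ (fun b : Fin (n+1) → Bool => b 0 = true)]
    rw [card_split (fun b : Fin (n+1) → Bool => (cntOnes b = k ∧ cntDesc b = s'+1) ∧ b 0 = true)
        (fun b => b (Fin.last n) = true)]
    rw [card_split (fun b : Fin (n+1) → Bool => (cntOnes b = k ∧ cntDesc b = s'+1) ∧ ¬ b 0 = true)
        (fun b => b (Fin.last n) = true)]
    have hkz : k + k = n + 1 := by omega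
    have e1 : (univ.filter (fun b : Fin (n+1) → Bool =>
        ((cntOnes b = k ∧ cntDesc b = s'+1) ∧ b 0 = true) ∧ b (Fin.last n) = true)).card
        = (WS n k (s'+1) true true).card := by
      apply congrArg; apply Finset.filter_congr; intro b _
      rw [cntOnes_eq_wones, cntDesc_eq]
      cases hb0 : b 0 <;> cases hbl : b (Fin.last n) <;> simp [hb0, hbl, WS] <;> intros <;> omega
    have e2 : (univ.filter (fun b : Fin (n+1) → Bool =>
        ((cntOnes b = k ∧ cntDesc b = s'+1) ∧ b 0 = true) ∧ ¬ b (Fin.last n) = true)).card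
        = (WS n k (s'+1) true false).card := by
      apply congrArg; apply Finset.filter_congr; intro b _
      rw [cntOnes_eq_wones, cntDesc_eq]
      cases hb0 : b 0 <;> cases hbl : b (Fin.last n) <;> simp [hb0, hbl, WS] <;> intros <;> omega
    have e3 : (univ.filter (fun b : Fin (n+1) → Bool =>
        ((cntOnes b = k ∧ cntDesc b = s'+1) ∧ ¬ b 0 = true) ∧ b (Fin.last n) = true)).card
        = (WS n k s' false true).card := by
      apply congrArg; apply Finset.filter_congr; intro b _
      rw [cntOnes_eq_wones, cntDesc_eq]
      cases hb0 : b 0 <;> cases hbl : b (Fin.last n) <;> simp [hb0, hbl, WS] <;> intros <;> omega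
    have e4 : (univ.filter (fun b : Fin (n+1) → Bool =>
        ((cntOnes b = k ∧ cntDesc b = s'+1) ∧ ¬ b 0 = true) ∧ ¬ b (Fin.last n) = true)).card
        = (WS n k (s'+1) false false).card := by
      apply congrArg; apply Finset.filter_congr; intro b _
      rw [cntOnes_eq_wones, cntDesc_eq]
      cases hb0 : b 0 <;> cases hbl : b (Fin.last n) <;> simp [hb0, hbl, WS] <;> intros <;> omega
    rw [e1, e2, e3, e4, L1 n k k (s'+1) true true hkz, L1 n k k (s'+1) true false hkz,
      L1 n k k s' false true hkz, L1 n k k (s'+1) false false hkz]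
    -- closed forms
    rcases k with _ | k'
    · omega
    · simp only [cf, Bool.false_eq_true, Bool.true_eq_false, if_true, if_false,
        Nat.add_sub_cancel, myc_succ_succ]
      rw [Nat.choose_succ_succ k' s']
      ring

end Cyclic2

lemma succ_mod_eq {L : ℕ} [NeZero L] (t : Fin L) :
    (⟨((t : ℕ) + 1) % L, Nat.mod_lt _ t.pos⟩ : Fin L) = t + 1 := by
  apply Fin.ext
  rw [Fin.add_def, Fin.val_one']
  show ((t : ℕ) + 1) % L = ((t : ℕ) + 1 % L) % L
  conv_lhs => rw [Nat.add_mod]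
  conv_rhs => rw [Nat.add_mod]
  simp

lemma cyclicArcs_eq {nv L : ℕ} [NeZero L] (v : Fin L → Fin nv) :
    cyclicArcs v = Multiset.map (fun t => (v t, v (t+1))) Finset.univ.val := by
  unfold cyclicArcs
  apply Multiset.map_congr rfl
  intro t _
  rw [succ_mod_eq]

lemma count_arcs {nv L : ℕ} [NeZero L] (v : Fin L → Fin nv) (x y : Fin nv) :
    Multiset.count (x, y) (cyclicArcs v)
      = (univ.filter (fun t => v t = x ∧ v (t+1) = y)).card := by
  rw [cyclicArcs_eq, Multiset.count_map]
  have h1 : ((univ : Finset (Fin L)).filter (fun t => (x,y) = (v t, v (t+1)))).card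
      = Multiset.card (Multiset.filter (fun t => (x,y) = (v t, v (t+1))) univ.val) := by
    rw [Finset.card_def, Finset.filter_val]
  rw [← h1]
  apply congrArg
  apply Finset.filter_congr
  intro t _
  rw [Prod.ext_iff]
  simp [eq_comm]

theorem helper (nv : ℕ) (i j : Fin nv) (hij : i ≠ j) (k s N : ℕ)
    (hk : 1 ≤ k) (hs : s ≤ k) (hN : N + 1 = 2 * k) :
    (Finset.univ.filter (fun v : Fin (N+1) → Fin nv =>
        cyclicArcs v =
          Multiset.replicate s (i, j) + Multiset.replicate s (j, i) +
          Multiset.replicate (k - s) (i, i) +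
          Multiset.replicate (k - s) (j, j))).card
      = if s = 0 then 0 else 2 * Nat.choose k s * Nat.choose (k-1) (s-1) := by
  set E : Multiset (Fin nv × Fin nv) :=
    Multiset.replicate s (i, j) + Multiset.replicate s (j, i) +
      Multiset.replicate (k - s) (i, i) + Multiset.replicate (k - s) (j, j) with hE
  have hcount_ij : Multiset.count (i, j) E = s := by
    simp [hE, Multiset.count_replicate, Prod.ext_iff, hij, hij.symm]
  have hcount_ji : Multiset.count (j, i) E = s := by
    simp [hE, Multiset.count_replicate, Prod.ext_iff, hij, hij.symm]
  have hcount_ii : Multiset.count (i, i) E = k - s := by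
    simp [hE, Multiset.count_replicate, Prod.ext_iff, hij, hij.symm]
  have hcount_jj : Multiset.count (j, j) E = k - s := by
    simp [hE, Multiset.count_replicate, Prod.ext_iff, hij, hij.symm]
  rw [← count_bool k s hk hN hs]
  apply Finset.card_bij' (fun v _ => (fun t => v t == i))
    (fun b _ => (fun t => if b t = true then i else j))
  -- forward membership
  · intro v hv
    rw [Finset.mem_filter] at hv
    obtain ⟨-, harcs⟩ := hv
    have hrange : ∀ t, v t = i ∨ v t = j := by
      intro t
      have hmem : (v t, v (t+1)) ∈ E := by
        rw [← harcs, cyclicArcs_eq]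
        exact Multiset.mem_map.mpr ⟨t, Finset.mem_val.mpr (Finset.mem_univ t), rfl⟩
      rw [hE] at hmem
      rcases Multiset.mem_add.mp hmem with hm | hm
      · rcases Multiset.mem_add.mp hm with hm' | hm'
        · rcases Multiset.mem_add.mp hm' with hm'' | hm''
          · left; exact congrArg Prod.fst (Multiset.eq_of_mem_replicate hm'')
          · right; exact congrArg Prod.fst (Multiset.eq_of_mem_replicate hm'')
        · left; exact congrArg Prod.fst (Multiset.eq_of_mem_replicate hm')
      · right; exact congrArg Prod.fst (Multiset.eq_of_mem_replicate hm)
    have hAij : (univ.filter (fun t : Fin (N+1) => v t = i ∧ v (t+1) = j)).card = s := by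
      rw [← count_arcs, harcs, hcount_ij]
    have hAii : (univ.filter (fun t : Fin (N+1) => v t = i ∧ v (t+1) = i)).card = k - s := by
      rw [← count_arcs, harcs, hcount_ii]
    rw [Finset.mem_filter]
    refine ⟨Finset.mem_univ _, ?_, ?_⟩
    · -- cntOnes = k
      have h1 : cntOnes (fun t => v t == i)
          = (univ.filter (fun t : Fin (N+1) => v t = i)).card := by
        unfold cntOnes
        apply congrArg
        apply Finset.filter_congr
        intro t _
        simp
      rw [h1, card_split (fun t : Fin (N+1) => v t = i) (fun t => v (t+1) = i)]
      have h2 : (univ.filter (fun t : Fin (N+1) => v t = i ∧ ¬ v (t+1) = i)).card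
          = (univ.filter (fun t : Fin (N+1) => v t = i ∧ v (t+1) = j)).card := by
        apply congrArg
        apply Finset.filter_congr
        intro t _
        rcases hrange (t+1) with h | h <;> simp [h, hij, hij.symm]
      rw [h2, hAij, hAii]
      omega
    · -- cntDesc = s
      have h1 : cntDesc (fun t => v t == i)
          = (univ.filter (fun t : Fin (N+1) => v t = i ∧ v (t+1) = j)).card := by
        unfold cntDesc
        apply congrArg
        apply Finset.filter_congr
        intro t _
        rcases hrange (t+1) with h | h <;> rcases hrange t with h' | h' <;>
          simp [h, h', hij, hij.symm]
      rw [h1, hAij]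
  -- backward membership
  · intro b hb
    rw [Finset.mem_filter] at hb
    obtain ⟨-, hones, hdesc⟩ := hb
    set w : Fin (N+1) → Fin nv := fun t => if b t = true then i else j with hw
    have hwi : ∀ t, w t = i ↔ b t = true := by
      intro t
      rw [hw]
      cases hbt : b t <;> simp [hbt, hij, hij.symm]
    have hwj : ∀ t, w t = j ↔ b t = false := by
      intro t
      rw [hw]
      cases hbt : b t <;> simp [hbt, hij, hij.symm]
    have hasc := asc_eq_desc b
    have h3 := card_split (fun t : Fin (N+1) => b t = true) (fun t => b (t+1) = true)
    have h4 := card_split (fun t : Fin (N+1) => b t = false) (fun t => b (t+1) = true)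
    have h5 := Finset.card_filter_add_card_filter_not
      (s := (univ : Finset (Fin (N+1)))) (p := fun t => b t = true)
    have hcardu : (univ : Finset (Fin (N+1))).card = N + 1 := by simp
    have e3 : (univ.filter (fun t : Fin (N+1) => b t = true ∧ ¬ b (t+1) = true)).card
        = cntDesc b := by
      apply congrArg; apply Finset.filter_congr; intro t _
      cases hbt : b (t+1) <;> simp [hbt]
    have e4 : (univ.filter (fun t : Fin (N+1) => b t = false ∧ b (t+1) = true)).card
        = cntDesc b := hasc
    have e5 : (univ.filter (fun t : Fin (N+1) => ¬ b t = true)).card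
        = (univ.filter (fun t : Fin (N+1) => b t = false)).card := by
      apply congrArg; apply Finset.filter_congr; intro t _
      cases hbt : b t <;> simp [hbt]
    rw [Finset.mem_filter]
    refine ⟨Finset.mem_univ _, ?_⟩
    rw [cyclicArcs_eq]
    ext x
    obtain ⟨x1, x2⟩ := x
    rw [show Multiset.count (x1, x2) (Multiset.map (fun t => (w t, w (t+1))) univ.val)
        = Multiset.count (x1, x2) (cyclicArcs w) from by rw [cyclicArcs_eq], count_arcs]
    by_cases hx1 : x1 = i ∨ x1 = j
    swap
    · push_neg at hx1
      have hz : (univ.filter (fun t : Fin (N+1) => w t = x1 ∧ w (t+1) = x2)).card = 0 := by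
        rw [Finset.card_eq_zero]
        apply Finset.filter_false_of_mem
        intro t _
        rintro ⟨h1, -⟩
        rw [hw] at h1
        rcases ite_eq_or_eq (b t = true) i j with h | h <;>
          [exact hx1.1 (h ▸ h1.symm ▸ rfl); exact hx1.2 (h ▸ h1.symm ▸ rfl)]
      rw [hz, hE]
      symm
      simp [Multiset.count_replicate, Prod.ext_iff, Ne.symm hx1.1, Ne.symm hx1.2]
    · by_cases hx2 : x2 = i ∨ x2 = j
      swap
      · push_neg at hx2
        have hz : (univ.filter (fun t : Fin (N+1) => w t = x1 ∧ w (t+1) = x2)).card = 0 := by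
          rw [Finset.card_eq_zero]
          apply Finset.filter_false_of_mem
          intro t _
          rintro ⟨-, h2⟩
          rw [hw] at h2
          rcases ite_eq_or_eq (b (t+1) = true) i j with h | h <;>
            [exact hx2.1 (h ▸ h2.symm ▸ rfl); exact hx2.2 (h ▸ h2.symm ▸ rfl)]
        rw [hz, hE]
        symm
        simp [Multiset.count_replicate, Prod.ext_iff, Ne.symm hx2.1, Ne.symm hx2.2]
      · have hones' : (univ.filter (fun t : Fin (N+1) => b t = true)).card = k := hones
        have hdesc' : (univ.filter (fun t : Fin (N+1) =>
            b t = true ∧ b (t+1) = false)).card = s := hdesc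
        have e6 : (univ.filter (fun t : Fin (N+1) => b t = false ∧ ¬ b (t+1) = true)).card
            = (univ.filter (fun t : Fin (N+1) => b t = false ∧ b (t+1) = false)).card := by
          apply congrArg; apply Finset.filter_congr; intro t _
          cases hbt : b (t+1) <;> simp [hbt]
        rw [cntDesc] at e3 e4
        rcases hx1 with h1 | h1 <;> rcases hx2 with h2 | h2 <;> rw [h1, h2]
        · -- (i,i)
          have hc : (univ.filter (fun t : Fin (N+1) => w t = i ∧ w (t+1) = i)).card
              = (univ.filter (fun t : Fin (N+1) => b t = true ∧ b (t+1) = true)).card := by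
            apply congrArg; apply Finset.filter_congr; intro t _; simp [hwi]
          rw [hc, hcount_ii]
          omega
        · -- (i,j)
          have hc : (univ.filter (fun t : Fin (N+1) => w t = i ∧ w (t+1) = j)).card
              = (univ.filter (fun t : Fin (N+1) => b t = true ∧ b (t+1) = false)).card := by
            apply congrArg; apply Finset.filter_congr; intro t _; simp [hwi, hwj]
          rw [hc, hcount_ij]
          omega
        · -- (j,i)
          have hc : (univ.filter (fun t : Fin (N+1) => w t = j ∧ w (t+1) = i)).card
              = (univ.filter (fun t : Fin (N+1) => b t = false ∧ b (t+1) = true)).card := by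
            apply congrArg; apply Finset.filter_congr; intro t _; simp [hwi, hwj]
          rw [hc, hcount_ji]
          omega
        · -- (j,j)
          have hc : (univ.filter (fun t : Fin (N+1) => w t = j ∧ w (t+1) = j)).card
              = (univ.filter (fun t : Fin (N+1) => b t = false ∧ b (t+1) = false)).card := by
            apply congrArg; apply Finset.filter_congr; intro t _; simp [hwj]
          rw [hc, hcount_jj]
          omega
  · -- left inverse
    intro v hv
    rw [Finset.mem_filter] at hv
    obtain ⟨-, harcs⟩ := hv
    have hrange : ∀ t, v t = i ∨ v t = j := by
      intro t
      have hmem : (v t, v (t+1)) ∈ E := by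
        rw [← harcs, cyclicArcs_eq]
        exact Multiset.mem_map.mpr ⟨t, Finset.mem_val.mpr (Finset.mem_univ t), rfl⟩
      rw [hE] at hmem
      rcases Multiset.mem_add.mp hmem with hm | hm
      · rcases Multiset.mem_add.mp hm with hm' | hm'
        · rcases Multiset.mem_add.mp hm' with hm'' | hm''
          · left; exact congrArg Prod.fst (Multiset.eq_of_mem_replicate hm'')
          · right; exact congrArg Prod.fst (Multiset.eq_of_mem_replicate hm'')
        · left; exact congrArg Prod.fst (Multiset.eq_of_mem_replicate hm')
      · right; exact congrArg Prod.fst (Multiset.eq_of_mem_replicate hm)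
    funext t
    rcases hrange t with h | h <;> simp [h, hij, hij.symm]
  · -- right inverse
    intro b _
    funext t
    cases hbt : b t <;> simp [hbt, hij, hij.symm]

theorem stmt19 (n m : ℕ) (hm : 2 ≤ m) (i j : Fin n) (hij : i ≠ j) (s : ℕ)
    (hs : s ≤ m - 1) :
    (Finset.univ.filter (fun v : Fin (2 * (m - 1)) → Fin n =>
        cyclicArcs v =
          Multiset.replicate s (i, j) + Multiset.replicate s (j, i) +
          Multiset.replicate (m - 1 - s) (i, i) +
          Multiset.replicate (m - 1 - s) (j, j))).card =
      if s = 0 then 0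
      else 2 * Nat.choose (m - 1) s * Nat.choose (m - 2) (s - 1) := by
  have hk : 1 ≤ m - 1 := by omega
  obtain ⟨N, hN⟩ : ∃ N, 2 * (m - 1) = N + 1 := ⟨2 * (m - 1) - 1, by omega⟩
  rw [hN]
  rw [helper n i j hij (m - 1) s N hk hs (by omega)]
  rw [show m - 1 - 1 = m - 2 by omega]
end
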